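/- arXiv:1803.08166 — 7 statements merged into one kernel-verified Lean document; each statement's English description precedes it below -/
import Mathlib

section
/- Let θ > 0 and k₂ > 0 be fixed real constants, and suppose 0 < A < k₂/θ². Then h_A has exactly one zero ȳ(A) in (0, ∞); moreover h_A(y) < 0 for all y ∈ (0, ȳ(A)) and h_A(y) > 0 for all y ∈ (ȳ(A), ∞). -/
/-!
`h_A` vanishes at `0`, is strictly convex on `[0, ∞)` (its derivative
`2 (A θ² cosh θy − k₂)` increases there), has `h_A'(0) = 2 (A θ² − k₂) < 0`, and grows
exponentially. Hence the secant slope `h_A(y) / y` is strictly increasing on `(0, ∞)`, negative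
near `0` and eventually positive; since it has the sign of `h_A(y)`, it locates the unique zero
and the sign pattern.
-/

/-- `h_A(y) = A θ e^{θ y} − A θ e^{−θ y} − 2 k₂ y`. -/
noncomputable def hFun (θ k₂ A y : ℝ) : ℝ :=
  A * θ * Real.exp (θ * y) - A * θ * Real.exp (-(θ * y)) - 2 * k₂ * y

open Real Set Filter Topology

theorem StrictConvexOn.exists_unique_pos_zero {f : ℝ → ℝ} (hf : StrictConvexOn ℝ (Ici 0) f)
    (hf0 : f 0 = 0) {a b : ℝ} (ha : 0 < a) (hfa : f a < 0) (hb : 0 < b) (hfb : 0 < f b) :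
    ∃ c : ℝ, 0 < c ∧ f c = 0 ∧ (∀ y : ℝ, 0 < y → f y = 0 → y = c) ∧
      (∀ y : ℝ, 0 < y → y < c → f y < 0) ∧ (∀ y : ℝ, c < y → 0 < f y) := by
  have hslope : StrictMonoOn (fun y => f y / y) (Ioi 0) :=
      fun x (hx : 0 < x) y (hy : 0 < y) hxy => by
    simpa [hf0] using hf.secant_strict_mono self_mem_Ici hx.le hy.le hx.ne' hy.ne' hxy
  have hsign : ∀ y, 0 < y → f y = f y / y * y := fun y hy => by field_simp
  have hab : a < b := by
    by_contra! hba
    have := (hslope.le_iff_le hb ha).2 hba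
    linarith [div_pos hfb hb, div_neg_of_neg_of_pos hfa ha]
  have hcont : ContinuousOn f (Ioi 0) := by
    simpa using hf.convexOn.continuousOn_interior
  obtain ⟨c, hc, hfc⟩ := intermediate_value_Icc hab.le
    (hcont.mono fun y hy => ha.trans_le hy.1) ⟨hfa.le, hfb.le⟩
  have hc0 : 0 < c := ha.trans_le hc.1
  have hgc : f c / c = 0 := by rw [hfc, zero_div]
  refine ⟨c, hc0, hfc, fun y hy hfy => ?_, fun y hy hyc => ?_, fun y hcy => ?_⟩
  · exact hslope.injOn hy hc0 (by simp only [hfy, hgc, zero_div])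
  · rw [hsign y hy]
    exact mul_neg_of_neg_of_pos (hgc ▸ hslope hy hc0 hyc) hy
  · have hy : 0 < y := hc0.trans hcy
    rw [hsign y hy]
    exact mul_pos (hgc ▸ hslope hc0 hy hcy) hy

lemma exists_gt_lt_zero_of_deriv_neg {f : ℝ → ℝ} {x₀ : ℝ} (hf : deriv f x₀ < 0)
    (hx₀ : f x₀ = 0) : ∃ a, x₀ < a ∧ f a < 0 := by
  obtain ⟨a, hsign, ha⟩ := ((eventually_nhdsWithin_of_eventually_nhds
    (eventually_nhdsWithin_sign_eq_of_deriv_neg hf hx₀)).and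
      (self_mem_nhdsWithin (s := Ioi x₀))).exists
  refine ⟨a, ha, ?_⟩
  rwa [sign_neg (sub_neg.2 ha), sign_eq_neg_one_iff] at hsign

lemma hFun_eq (θ k₂ A y : ℝ) : hFun θ k₂ A y = 2 * (A * θ * sinh (θ * y) - k₂ * y) := by
  rw [hFun, sinh_eq]; ring

lemma hasDerivAt_hFun (θ k₂ A y : ℝ) :
    HasDerivAt (hFun θ k₂ A) (2 * (A * θ ^ 2 * cosh (θ * y) - k₂)) y := by
  have hlin : HasDerivAt (fun y => θ * y) θ y := by simpa using (hasDerivAt_id y).const_mul θ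
  have h : HasDerivAt (fun y => 2 * (A * θ * sinh (θ * y) - k₂ * y))
      (2 * (A * θ * (cosh (θ * y) * θ) - k₂ * 1)) y :=
    ((hlin.sinh.const_mul (A * θ)).sub ((hasDerivAt_id y).const_mul k₂)).const_mul 2
  rw [show hFun θ k₂ A = _ from funext (hFun_eq θ k₂ A)]
  convert h using 1
  ring

lemma strictConvexOn_hFun {θ : ℝ} (hθ : θ ≠ 0) (k₂ : ℝ) {A : ℝ} (hA : 0 < A) :
    StrictConvexOn ℝ (Ici 0) (hFun θ k₂ A) := by
  refine StrictMonoOn.strictConvexOn_of_deriv (convex_Ici 0)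
    (fun y _ => (hasDerivAt_hFun θ k₂ A y).continuousAt.continuousWithinAt) ?_
  rw [interior_Ici]
  intro x (hx : 0 < x) y (hy : 0 < y) hxy
  simp only [(hasDerivAt_hFun _ _ _ _).deriv]
  have hcosh : cosh (θ * x) < cosh (θ * y) := by
    rw [cosh_lt_cosh, abs_mul, abs_mul, abs_of_pos hx, abs_of_pos hy]
    exact mul_lt_mul_of_pos_left hxy (abs_pos.2 hθ)
  have hAθ : 0 < A * θ ^ 2 := by positivity
  nlinarith

-- `b` is chosen so that the quadratic term of `exp θb ≥ 1 + θb + (θb)² / 2` cancels `2 k₂ b`.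
lemma hFun_pos {θ k₂ A : ℝ} (hθ : 0 < θ) (hk : 0 < k₂) (hA : 0 < A) :
    0 < hFun θ k₂ A (4 * k₂ / (A * θ ^ 3)) := by
  set b := 4 * k₂ / (A * θ ^ 3)
  have hb : A * θ ^ 3 * b = 4 * k₂ := by simp only [b]; field_simp
  have hexp := quadratic_le_exp_of_nonneg (x := θ * b) (by positivity)
  have hexp' : exp (-(θ * b)) ≤ 1 := exp_le_one_iff.2 (by simp only [neg_nonpos]; positivity)
  have hAθ : 0 < A * θ := by positivity
  have hb0 : 0 < b := by positivity
  rw [hFun]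
  nlinarith [mul_le_mul_of_nonneg_left hexp hAθ.le, mul_le_mul_of_nonneg_left hexp' hAθ.le,
    mul_pos (mul_pos hAθ hθ) hb0]

theorem stmt_1 (θ k₂ A : ℝ) (hθ : 0 < θ) (hk : 0 < k₂)
    (hA0 : 0 < A) (hA : A < k₂ / θ ^ 2) :
    ∃ ybar : ℝ, 0 < ybar ∧ hFun θ k₂ A ybar = 0 ∧
      (∀ y : ℝ, 0 < y → hFun θ k₂ A y = 0 → y = ybar) ∧
      (∀ y : ℝ, 0 < y → y < ybar → hFun θ k₂ A y < 0) ∧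
      (∀ y : ℝ, ybar < y → 0 < hFun θ k₂ A y) := by
  have hzero : hFun θ k₂ A 0 = 0 := by simp [hFun]
  have hderiv : deriv (hFun θ k₂ A) 0 < 0 := by
    rw [(hasDerivAt_hFun θ k₂ A 0).deriv, mul_zero, cosh_zero, mul_one]
    linarith [(lt_div_iff₀ (by positivity)).1 hA]
  obtain ⟨a, ha, hfa⟩ := exists_gt_lt_zero_of_deriv_neg hderiv hzero
  exact (strictConvexOn_hFun hθ.ne' k₂ hA0).exists_unique_pos_zero hzero ha hfa
    (by positivity) (hFun_pos hθ hk hA0)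
end

section
/- The map A ↦ ȳ(A) satisfies lim_{A → 0⁺} ȳ(A) = +∞ and lim_{A → (k₂/θ²)⁻} ȳ(A) = 0. -/
/-!
At a root `y > 0` the equation `h_A(y) = 0` reads `A θ sinh (θ y) = k₂ y`. The elementary bounds
`sinh t ≤ t eᵗ` and `t + t³/6 ≤ sinh t` (for `t ≥ 0`) turn it into the two-sided estimate
`Ā / A ≤ exp (θ ȳ)` and `ȳ² ≤ 6 (Ā - A) / (A θ²)`, which give the two limits.
-/

open Real Filter Topology Set

namespace Real

theorem sinh_le_mul_exp (t : ℝ) : sinh t ≤ t * exp t := by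
  have key : exp t * (1 - 2 * t) ≤ exp (-t) :=
    calc exp t * (1 - 2 * t) ≤ exp t * exp (-2 * t) := by
          gcongr; linarith [add_one_le_exp (-2 * t)]
      _ = exp (-t) := by rw [← exp_add]; ring_nf
  rw [sinh_eq]
  linarith

theorem add_pow_three_div_six_le_sinh {t : ℝ} (ht : 0 ≤ t) : t + t ^ 3 / 6 ≤ sinh t := by
  have h := sum_le_hasSum (Finset.range 2) (fun n _ => by positivity) (hasSum_sinh t)
  norm_num [Finset.sum_range_succ, Nat.factorial] at h
  linarith

end Real

theorem hFun_eq_zero_iff {θ k₂ A y : ℝ} :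
    hFun θ k₂ A y = 0 ↔ A * θ * sinh (θ * y) = k₂ * y := by
  rw [hFun, sinh_eq]
  constructor <;> intro h <;> linarith

section Root

variable {θ k₂ A y : ℝ}

theorem log_div_le_of_hFun_eq_zero (hθ : 0 < θ) (hk : 0 < k₂) (hA : 0 < A) (hy : 0 < y)
    (h : hFun θ k₂ A y = 0) : log (k₂ / θ ^ 2 / A) / θ ≤ y := by
  have hsinh := mul_le_mul_of_nonneg_left (sinh_le_mul_exp (θ * y)) (mul_pos hA hθ).le
  rw [hFun_eq_zero_iff.1 h] at hsinh
  have hexp : k₂ ≤ A * θ ^ 2 * exp (θ * y) := by nlinarith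
  rw [div_le_iff₀ hθ, mul_comm y, log_le_iff_le_exp (by positivity), div_div,
    div_le_iff₀ (by positivity)]
  linarith

theorem sq_le_of_hFun_eq_zero (hθ : 0 < θ) (hA : 0 < A) (hy : 0 < y)
    (h : hFun θ k₂ A y = 0) : y ^ 2 ≤ 6 * (k₂ / θ ^ 2 - A) / (A * θ ^ 2) := by
  have hsinh := mul_le_mul_of_nonneg_left
    (add_pow_three_div_six_le_sinh (mul_pos hθ hy).le) (mul_pos hA hθ).le
  rw [hFun_eq_zero_iff.1 h] at hsinh
  have hcubic : A * θ ^ 4 * y ^ 2 ≤ 6 * (k₂ - A * θ ^ 2) := by nlinarith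
  have hĀ : 6 * (k₂ / θ ^ 2 - A) = 6 * (k₂ - A * θ ^ 2) / θ ^ 2 := by field_simp
  rw [hĀ, div_div, le_div_iff₀ (by positivity)]
  linarith

end Root

theorem stmt_2 (θ k₂ : ℝ) (hθ : 0 < θ) (hk : 0 < k₂) (ybar : ℝ → ℝ)
    (hybar : ∀ A : ℝ, 0 < A → A < k₂ / θ ^ 2 →
      0 < ybar A ∧ hFun θ k₂ A (ybar A) = 0) :
    Filter.Tendsto ybar (nhdsWithin 0 (Set.Ioi 0)) Filter.atTop ∧
      Filter.Tendsto ybar (nhdsWithin (k₂ / θ ^ 2) (Set.Iio (k₂ / θ ^ 2))) (nhds 0) := by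
  have hĀ : 0 < k₂ / θ ^ 2 := by positivity
  constructor
  · have hlower : ∀ᶠ A in 𝓝[>] 0, log (k₂ / θ ^ 2 / A) / θ ≤ ybar A := by
      filter_upwards [Ioo_mem_nhdsGT hĀ] with A hA
      obtain ⟨hy, h⟩ := hybar A hA.1 hA.2
      exact log_div_le_of_hFun_eq_zero hθ hk hA.1 hy h
    refine tendsto_atTop_mono' _ hlower (Tendsto.atTop_div_const hθ ?_)
    simpa only [div_eq_mul_inv, Function.comp_def] using
      tendsto_log_atTop.comp (tendsto_inv_nhdsGT_zero.const_mul_atTop hĀ)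
  · have hbound : ∀ᶠ A in 𝓝[<] (k₂ / θ ^ 2),
        0 ≤ ybar A ∧ ybar A ≤ √(6 * (k₂ / θ ^ 2 - A) / (A * θ ^ 2)) := by
      filter_upwards [Ioo_mem_nhdsLT hĀ] with A hA
      obtain ⟨hy, h⟩ := hybar A hA.1 hA.2
      exact ⟨hy.le, le_sqrt_of_sq_le (sq_le_of_hFun_eq_zero hθ hA.1 hy h)⟩
    have hupper : Tendsto (fun A => √(6 * (k₂ / θ ^ 2 - A) / (A * θ ^ 2)))
        (𝓝[<] (k₂ / θ ^ 2)) (𝓝 0) := by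
      have hcont : ContinuousAt (fun A => √(6 * (k₂ / θ ^ 2 - A) / (A * θ ^ 2)))
          (k₂ / θ ^ 2) := by
        fun_prop (disch := positivity)
      simpa using hcont.tendsto.mono_left nhdsWithin_le_nhds
    exact tendsto_of_tendsto_of_tendsto_of_le_of_le' tendsto_const_nhds hupper
      (hbound.mono fun _ h => h.1) (hbound.mono fun _ h => h.2)
end

section
/- The function g is differentiable on (0, k₂/θ²) with g′(A) = −(e^{θ ȳ(A)} − 1)² / e^{θ ȳ(A)} < 0 for every A ∈ (0, k₂/θ²); in particular g is strictly decreasing on (0, k₂/θ²). -/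
/-- `g(A) = −A e^{θ ȳ(A)} − A e^{−θ ȳ(A)} + k₂ ȳ(A)² + 2A`. -/
noncomputable def gFun (θ k₂ : ℝ) (ybar : ℝ → ℝ) (A : ℝ) : ℝ :=
  -A * Real.exp (θ * ybar A) - A * Real.exp (-(θ * ybar A)) + k₂ * (ybar A) ^ 2 + 2 * A

/-!
Writing `h_A(y) = 2Aθ sinh(θy) − 2k₂y`, the root `ȳ(A)` is the inverse of
`y ↦ k₂y / (θ sinh(θy))`, which is strictly decreasing on `(0, ∞)` because `tanh u < u` and
takes values in `(0, k₂/θ²)` because `sinh u > u`. Hence `ȳ` is monotone with image `(0, ∞)`,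
so continuous, and then differentiable by the inverse function theorem. Since
`g(A) = 2A(1 − cosh(θȳ)) + k₂ȳ²` has `∂g/∂y = −h_A(y)`, which vanishes at `y = ȳ(A)`, the
envelope formula gives `g'(A) = 2(1 − cosh(θȳ(A))) = −(e^{θȳ} − 1)²/e^{θȳ} < 0`.
-/

open Real Set Filter Topology

theorem Real.sinh_lt_mul_cosh {u : ℝ} (hu : 0 < u) : sinh u < u * cosh u := by
  have hderiv (v : ℝ) : HasDerivAt (fun v => v * cosh v - sinh v) (v * sinh v) v := by
    have h : HasDerivAt (fun v => v * cosh v - sinh v) (1 * cosh v + v * sinh v - cosh v) v :=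
      ((hasDerivAt_id' v).mul (hasDerivAt_cosh v)).sub (hasDerivAt_sinh v)
    exact h.congr_deriv (by ring)
  have hmono : StrictMonoOn (fun v => v * cosh v - sinh v) (Ici 0) := by
    refine strictMonoOn_of_deriv_pos (convex_Ici 0)
      (fun v _ => (hderiv v).continuousAt.continuousWithinAt) fun v hv => ?_
    rw [interior_Ici, mem_Ioi] at hv
    rw [(hderiv v).deriv]
    exact mul_pos hv (sinh_pos_iff.2 hv)
  simpa using hmono self_mem_Ici hu.le hu

theorem Real.neg_sq_exp_sub_one_div_exp (u : ℝ) :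
    -(exp u - 1) ^ 2 / exp u = 2 * (1 - cosh u) := by
  rw [cosh_eq, exp_neg]
  field_simp
  ring

theorem hFun_eq_sinh (θ k₂ A y : ℝ) :
    hFun θ k₂ A y = 2 * A * θ * sinh (θ * y) - 2 * k₂ * y := by
  rw [hFun, sinh_eq]
  ring

theorem gFun_eq_cosh (θ k₂ : ℝ) (ybar : ℝ → ℝ) :
    gFun θ k₂ ybar = fun A => 2 * A * (1 - cosh (θ * ybar A)) + k₂ * ybar A ^ 2 := by
  ext A
  rw [gFun, cosh_eq]
  ring

theorem hasDerivAt_gFun {θ k₂ A y' : ℝ} {ybar : ℝ → ℝ} (hy : HasDerivAt ybar y' A)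
    (hroot : hFun θ k₂ A (ybar A) = 0) :
    HasDerivAt (gFun θ k₂ ybar) (2 * (1 - cosh (θ * ybar A))) A := by
  rw [gFun_eq_cosh]
  have h : HasDerivAt (fun A => 2 * A * (1 - cosh (θ * ybar A)) + k₂ * ybar A ^ 2)
      (2 * 1 * (1 - cosh (θ * ybar A)) + 2 * A * -(sinh (θ * ybar A) * (θ * y')) +
        k₂ * (2 * ybar A ^ 1 * y')) A :=
    (((hasDerivAt_id' A).const_mul 2).mul ((hy.const_mul θ).cosh.const_sub 1)).add
      ((hy.pow 2).const_mul k₂)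
  refine h.congr_deriv ?_
  rw [hFun_eq_sinh] at hroot
  linear_combination -y' * hroot

/-- The value of `A` for which `y` is a root of `h_A`; `ȳ` is its inverse. -/
noncomputable def rootParam (θ k₂ y : ℝ) : ℝ :=
  k₂ * y / (θ * sinh (θ * y))

section rootParam

variable {θ k₂ : ℝ}

theorem rootParam_eq_of_hFun_eq_zero {A y : ℝ} (hθ : θ ≠ 0) (hy : y ≠ 0)
    (hroot : hFun θ k₂ A y = 0) : rootParam θ k₂ y = A := by
  rw [hFun_eq_sinh] at hroot
  have : θ * sinh (θ * y) ≠ 0 := mul_ne_zero hθ (sinh_ne_zero.2 (mul_ne_zero hθ hy))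
  rw [rootParam, div_eq_iff this]
  linear_combination -hroot / 2

theorem hasDerivAt_rootParam {y : ℝ} (hθ : θ ≠ 0) (hy : y ≠ 0) :
    HasDerivAt (rootParam θ k₂)
      (k₂ * (sinh (θ * y) - θ * y * cosh (θ * y)) / (θ * sinh (θ * y) ^ 2)) y := by
  have hsinh : sinh (θ * y) ≠ 0 := sinh_ne_zero.2 (mul_ne_zero hθ hy)
  have hlin : HasDerivAt (fun v => θ * v) θ y := by
    simpa using (hasDerivAt_id y).const_mul θ
  have h : HasDerivAt (fun y => k₂ * y / (θ * sinh (θ * y)))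
      ((k₂ * 1 * (θ * sinh (θ * y)) - k₂ * y * (θ * (cosh (θ * y) * θ))) /
        (θ * sinh (θ * y)) ^ 2) y :=
    ((hasDerivAt_id' y).const_mul k₂).div (hlin.sinh.const_mul θ) (mul_ne_zero hθ hsinh)
  refine h.congr_deriv ?_
  field_simp

theorem deriv_rootParam_neg {y : ℝ} (hθ : 0 < θ) (hk : 0 < k₂) (hy : 0 < y) :
    deriv (rootParam θ k₂) y < 0 := by
  rw [(hasDerivAt_rootParam hθ.ne' hy.ne').deriv]
  have hu : 0 < θ * y := mul_pos hθ hy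
  refine div_neg_of_neg_of_pos (mul_neg_of_pos_of_neg hk ?_) (by positivity)
  linarith [sinh_lt_mul_cosh hu]

theorem strictAntiOn_rootParam (hθ : 0 < θ) (hk : 0 < k₂) :
    StrictAntiOn (rootParam θ k₂) (Ioi 0) := by
  refine strictAntiOn_of_deriv_neg (convex_Ioi 0)
    (fun y hy => (hasDerivAt_rootParam hθ.ne' (ne_of_gt hy)).continuousAt.continuousWithinAt)
    fun y hy => ?_
  rw [interior_Ioi] at hy
  exact deriv_rootParam_neg hθ hk hy

theorem rootParam_mem_Ioo {y : ℝ} (hθ : 0 < θ) (hk : 0 < k₂) (hy : 0 < y) :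
    rootParam θ k₂ y ∈ Ioo 0 (k₂ / θ ^ 2) := by
  have hu : 0 < θ * y := mul_pos hθ hy
  have hsinh : 0 < sinh (θ * y) := sinh_pos_iff.2 hu
  refine ⟨by unfold rootParam; positivity, ?_⟩
  rw [rootParam, div_lt_div_iff₀ (by positivity) (by positivity)]
  have := self_lt_sinh_iff.2 hu
  have : 0 < k₂ * θ := by positivity
  nlinarith

end rootParam

def IsPosRootFamily (θ k₂ : ℝ) (ybar : ℝ → ℝ) : Prop :=
  ∀ A : ℝ, 0 < A → A < k₂ / θ ^ 2 → 0 < ybar A ∧ hFun θ k₂ A (ybar A) = 0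

section ybar

variable {θ k₂ : ℝ} {ybar : ℝ → ℝ}

theorem rootParam_ybar (hθ : 0 < θ) (hybar : IsPosRootFamily θ k₂ ybar)
    {A : ℝ} (hA : A ∈ Ioo 0 (k₂ / θ ^ 2)) : rootParam θ k₂ (ybar A) = A :=
  have ⟨hy, hroot⟩ := hybar A hA.1 hA.2
  rootParam_eq_of_hFun_eq_zero hθ.ne' hy.ne' hroot

theorem ybar_rootParam (hθ : 0 < θ) (hk : 0 < k₂) (hybar : IsPosRootFamily θ k₂ ybar)
    {y : ℝ} (hy : 0 < y) : ybar (rootParam θ k₂ y) = y := by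
  have hA := rootParam_mem_Ioo hθ hk hy
  exact (strictAntiOn_rootParam hθ hk).injOn (hybar _ hA.1 hA.2).1 hy
    (rootParam_ybar hθ hybar hA)

theorem strictAntiOn_ybar (hθ : 0 < θ) (hk : 0 < k₂) (hybar : IsPosRootFamily θ k₂ ybar) :
    StrictAntiOn ybar (Ioo 0 (k₂ / θ ^ 2)) := by
  intro A hA B hB hAB
  rw [← (strictAntiOn_rootParam hθ hk).lt_iff_gt (hybar A hA.1 hA.2).1 (hybar B hB.1 hB.2).1,
    rootParam_ybar hθ hybar hA, rootParam_ybar hθ hybar hB]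
  exact hAB

theorem continuousAt_ybar (hθ : 0 < θ) (hk : 0 < k₂) (hybar : IsPosRootFamily θ k₂ ybar)
    {A : ℝ} (hA : A ∈ Ioo 0 (k₂ / θ ^ 2)) : ContinuousAt ybar A := by
  have himage : Ioi 0 ⊆ ybar '' Ioo 0 (k₂ / θ ^ 2) := fun y hy =>
    ⟨rootParam θ k₂ y, rootParam_mem_Ioo hθ hk hy, ybar_rootParam hθ hk hybar hy⟩
  have hnhds : ybar '' Ioo 0 (k₂ / θ ^ 2) ∈ 𝓝 (ybar A) :=
    mem_of_superset (Ioi_mem_nhds (hybar A hA.1 hA.2).1) himage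
  exact (strictAntiOn_ybar hθ hk hybar).dual_right.continuousAt_of_image_mem_nhds
    (isOpen_Ioo.mem_nhds hA) hnhds

theorem differentiableAt_ybar (hθ : 0 < θ) (hk : 0 < k₂) (hybar : IsPosRootFamily θ k₂ ybar)
    {A : ℝ} (hA : A ∈ Ioo 0 (k₂ / θ ^ 2)) : DifferentiableAt ℝ ybar A := by
  have hy := (hybar A hA.1 hA.2).1
  exact (HasDerivAt.of_local_left_inverse (continuousAt_ybar hθ hk hybar hA)
    (hasDerivAt_rootParam hθ.ne' hy.ne').differentiableAt.hasDerivAt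
    (deriv_rootParam_neg hθ hk hy).ne
    (eventually_of_mem (isOpen_Ioo.mem_nhds hA) fun B hB => rootParam_ybar hθ hybar hB))
    |>.differentiableAt

end ybar

theorem stmt_4 (θ k₂ : ℝ) (hθ : 0 < θ) (hk : 0 < k₂) (ybar : ℝ → ℝ)
    (hybar : ∀ A : ℝ, 0 < A → A < k₂ / θ ^ 2 →
      0 < ybar A ∧ hFun θ k₂ A (ybar A) = 0) :
    (∀ A : ℝ, 0 < A → A < k₂ / θ ^ 2 →
      HasDerivAt (gFun θ k₂ ybar)
        (-(Real.exp (θ * ybar A) - 1) ^ 2 / Real.exp (θ * ybar A)) A ∧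
      -(Real.exp (θ * ybar A) - 1) ^ 2 / Real.exp (θ * ybar A) < 0) ∧
    StrictAntiOn (gFun θ k₂ ybar) (Set.Ioo 0 (k₂ / θ ^ 2)) := by
  have hderiv (A : ℝ) (hA : A ∈ Ioo 0 (k₂ / θ ^ 2)) :
      HasDerivAt (gFun θ k₂ ybar) (2 * (1 - cosh (θ * ybar A))) A ∧
        2 * (1 - cosh (θ * ybar A)) < 0 := by
    obtain ⟨hy, hroot⟩ := hybar A hA.1 hA.2
    refine ⟨hasDerivAt_gFun (differentiableAt_ybar hθ hk hybar hA).hasDerivAt hroot, ?_⟩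
    linarith [one_lt_cosh.2 (mul_pos hθ hy).ne']
  refine ⟨fun A hA₀ hA₁ => by simpa only [neg_sq_exp_sub_one_div_exp] using hderiv A ⟨hA₀, hA₁⟩,
    strictAntiOn_of_deriv_neg (convex_Ioo _ _)
      (fun A hA => (hderiv A hA).1.continuousAt.continuousWithinAt) fun A hA => ?_⟩
  rw [interior_Ioo] at hA
  rw [(hderiv A hA).1.deriv]
  exact (hderiv A hA).2
end

section
/- The function g satisfies lim_{A → 0⁺} g(A) = +∞ and lim_{A → (k₂/θ²)⁻} g(A) = 0. -/
open Real Filter Set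


/-- Helper: if `f 0 = 0` and `f` has nonnegative derivative on `[0,∞)`, then `f x ≥ 0`. -/
lemma aux_mono {f f' : ℝ → ℝ} (hd : ∀ x, HasDerivAt f (f' x) x)
    (h0 : ∀ x, 0 ≤ x → 0 ≤ f' x) {x : ℝ} (hx : 0 ≤ x) : f 0 ≤ f x := by
  have hm : MonotoneOn f (Set.Ici 0) := by
    apply monotoneOn_of_deriv_nonneg (convex_Ici 0)
      (fun y _ => (hd y).continuousAt.continuousWithinAt)
      (fun y _ => (hd y).differentiableAt.differentiableWithinAt)
    intro y hy
    rw [interior_Ici] at hy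
    rw [(hd y).deriv]
    exact h0 y (le_of_lt hy)
  exact hm Set.self_mem_Ici hx hx

lemma aux_self_le_sinh {x : ℝ} (hx : 0 ≤ x) : x ≤ Real.sinh x := by
  have := aux_mono (f := fun x => Real.sinh x - x) (f' := fun x => Real.cosh x - 1)
    (fun y => (Real.hasDerivAt_sinh y).sub (hasDerivAt_id y))
    (fun y _ => by show (0:ℝ) ≤ Real.cosh y - 1; linarith [Real.one_le_cosh y]) hx
  simp only [Real.sinh_zero] at this
  linarith

lemma aux_sinh_le {x : ℝ} (hx : 0 ≤ x) : Real.sinh x ≤ x * Real.cosh x := by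
  have := aux_mono (f := fun x => x * Real.cosh x - Real.sinh x)
    (f' := fun x => (1 * Real.cosh x + x * Real.sinh x) - Real.cosh x)
    (fun y => ((hasDerivAt_id y).mul (Real.hasDerivAt_cosh y)).sub (Real.hasDerivAt_sinh y))
    (fun y hy => by show (0:ℝ) ≤ 1 * Real.cosh y + y * Real.sinh y - Real.cosh y; nlinarith [Real.sinh_nonneg_iff.2 hy]) hx
  simp only [Real.cosh_zero, Real.sinh_zero, zero_mul, sub_zero] at this
  linarith

lemma aux_cosh_ge {x : ℝ} (hx : 0 ≤ x) : 1 + x ^ 2 / 2 ≤ Real.cosh x := by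
  have := aux_mono (f := fun x => Real.cosh x - 1 - x ^ 2 / 2)
    (f' := fun x => Real.sinh x - 2 * x ^ 1 / 2)
    (fun y => ((Real.hasDerivAt_cosh y).sub_const 1).sub
      ((hasDerivAt_pow 2 y).div_const 2))
    (fun y hy => by have := aux_self_le_sinh hy; simp; linarith) hx
  simp only [Real.cosh_zero] at this
  nlinarith

lemma aux_sinh_ge {x : ℝ} (hx : 0 ≤ x) : x + x ^ 3 / 6 ≤ Real.sinh x := by
  have := aux_mono (f := fun x => Real.sinh x - x - x ^ 3 / 6)
    (f' := fun x => (Real.cosh x - 1) - 3 * x ^ 2 / 6)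
    (fun y => ((Real.hasDerivAt_sinh y).sub (hasDerivAt_id y)).sub
      ((hasDerivAt_pow 3 y).div_const 6))
    (fun y hy => by have := aux_cosh_ge hy; simp at this ⊢; nlinarith) hx
  simp only [Real.sinh_zero] at this
  nlinarith

lemma aux_cosh_le {x : ℝ} (hx : 0 ≤ x) : 2 * (Real.cosh x - 1) ≤ x * Real.sinh x := by
  have := aux_mono (f := fun x => x * Real.sinh x - 2 * Real.cosh x + 2)
    (f' := fun x => (1 * Real.sinh x + x * Real.cosh x) - 2 * Real.sinh x)
    (fun y => (((hasDerivAt_id y).mul (Real.hasDerivAt_sinh y)).sub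
      ((Real.hasDerivAt_cosh y).const_mul 2)).add_const 2)
    (fun y hy => by have := aux_sinh_le hy; simp; linarith) hx
  simp only [Real.sinh_zero, Real.cosh_zero, mul_zero, mul_one, zero_mul] at this
  linarith

theorem stmt_5 (θ k₂ : ℝ) (hθ : 0 < θ) (hk : 0 < k₂) (ybar : ℝ → ℝ)
    (hybar : ∀ A : ℝ, 0 < A → A < k₂ / θ ^ 2 →
      0 < ybar A ∧ hFun θ k₂ A (ybar A) = 0) :
    Filter.Tendsto (gFun θ k₂ ybar) (nhdsWithin 0 (Set.Ioi 0)) Filter.atTop ∧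
      Filter.Tendsto (gFun θ k₂ ybar)
        (nhdsWithin (k₂ / θ ^ 2) (Set.Iio (k₂ / θ ^ 2))) (nhds 0) := by
  have hAbar : 0 < k₂ / θ ^ 2 := by positivity
  -- key identity and rewriting of g
  have key : ∀ A : ℝ, 0 < A → A < k₂ / θ ^ 2 →
      A * θ * Real.sinh (θ * ybar A) = k₂ * ybar A := by
    intro A hA1 hA2
    have h0 := (hybar A hA1 hA2).2
    simp only [hFun] at h0
    rw [Real.sinh_eq]
    linarith
  have gval : ∀ A : ℝ, gFun θ k₂ ybar A
      = k₂ * (ybar A) ^ 2 - 2 * A * (Real.cosh (θ * ybar A) - 1) := by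
    intro A
    simp only [gFun, Real.cosh_eq]
    ring
  -- first limit
  constructor
  · -- ybar tends to atTop as A → 0⁺
    have hyb : Tendsto ybar (nhdsWithin 0 (Set.Ioi 0)) atTop := by
      rw [tendsto_atTop]
      intro M
      set M' : ℝ := |M| + 1 with hM'
      have hM'0 : 0 < M' := by positivity
      have hδ : 0 < min (k₂ / θ ^ 2) (k₂ / (θ ^ 2 * Real.cosh (θ * M'))) := by
        apply lt_min hAbar; positivity
      filter_upwards [Ioo_mem_nhdsGT_of_mem (Set.left_mem_Ico.2 hδ)] with A hA
      obtain ⟨hA1, hA2⟩ := hA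
      have hAb : A < k₂ / θ ^ 2 := lt_of_lt_of_le hA2 (min_le_left _ _)
      have hy := (hybar A hA1 hAb).1
      have hkey := key A hA1 hAb
      have hsl := aux_sinh_le (x := θ * ybar A) (by positivity)
      -- k₂ ≤ A * θ^2 * cosh (θ * ybar A)
      have h1 : k₂ ≤ A * θ ^ 2 * Real.cosh (θ * ybar A) := by
        have h2 : k₂ * ybar A ≤ A * θ ^ 2 * Real.cosh (θ * ybar A) * ybar A := by
          nlinarith [mul_le_mul_of_nonneg_left hsl (by positivity : (0:ℝ) ≤ A * θ)]
        exact le_of_mul_le_mul_right (by linarith) hy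
      have hc : Real.cosh (θ * M') < Real.cosh (θ * ybar A) := by
        have hAc : A < k₂ / (θ ^ 2 * Real.cosh (θ * M')) :=
          lt_of_lt_of_le hA2 (min_le_right _ _)
        have hcpos := Real.cosh_pos (θ * M')
        rw [lt_div_iff₀ (by positivity)] at hAc
        nlinarith [Real.cosh_pos (θ * ybar A)]
      rw [Real.cosh_lt_cosh] at hc
      rw [abs_of_pos (by positivity), abs_of_pos (by positivity)] at hc
      have : M' < ybar A := by
        have := (mul_lt_mul_iff_right₀ hθ).1 hc
        linarith
      calc M ≤ |M| := le_abs_self M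
        _ ≤ ybar A := by linarith
    -- compose with polynomial tendsto
    have hpoly : Tendsto (fun y : ℝ => k₂ * y ^ 2 - 2 * k₂ * y / θ) atTop atTop := by
      have h1 : Tendsto (fun y : ℝ => y - 1 / θ) atTop atTop :=
        tendsto_atTop_add_const_right _ _ tendsto_id
      have h2 : Tendsto (fun y : ℝ => k₂ * (y - 1 / θ) ^ 2 - k₂ / θ ^ 2) atTop atTop := by
        apply tendsto_atTop_add_const_right
        exact ((tendsto_pow_atTop two_ne_zero).comp h1).const_mul_atTop hk
      convert h2 using 2 with y
      field_simp
      ring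
    apply tendsto_atTop_mono' _ _ (hpoly.comp hyb)
    filter_upwards [Ioo_mem_nhdsGT_of_mem (Set.left_mem_Ico.2 hAbar)] with A hA
    obtain ⟨hA1, hA2⟩ := hA
    have hy := (hybar A hA1 hA2).1
    have hkey := key A hA1 hA2
    have hce : Real.cosh (θ * ybar A) - 1 ≤ Real.sinh (θ * ybar A) := by
      rw [Real.cosh_eq, Real.sinh_eq]
      have : Real.exp (-(θ * ybar A)) ≤ 1 :=
        Real.exp_le_one_iff.2 (neg_nonpos.2 (by positivity))
      linarith
    rw [Function.comp_apply, gval A]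
    have hsinh : 2 * A * Real.sinh (θ * ybar A) = 2 * k₂ * ybar A / θ := by
      field_simp
      nlinarith
    nlinarith [mul_le_mul_of_nonneg_left hce (by positivity : (0:ℝ) ≤ 2 * A)]
  · -- second limit: squeeze
    have hmem : Set.Ioo 0 (k₂ / θ ^ 2) ∈ nhdsWithin (k₂ / θ ^ 2) (Set.Iio (k₂ / θ ^ 2)) :=
      Ioo_mem_nhdsLT_of_mem (Set.right_mem_Ioc.2 hAbar)
    have hupper : Tendsto (fun A : ℝ => 6 * (k₂ - A * θ ^ 2) ^ 2 / (A * θ ^ 4))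
        (nhdsWithin (k₂ / θ ^ 2) (Set.Iio (k₂ / θ ^ 2))) (nhds 0) := by
      have hc : ContinuousAt (fun A : ℝ => 6 * (k₂ - A * θ ^ 2) ^ 2 / (A * θ ^ 4))
          (k₂ / θ ^ 2) := by
        apply ContinuousAt.div (by fun_prop) (by fun_prop)
        positivity
      have hval : 6 * (k₂ - (k₂ / θ ^ 2) * θ ^ 2) ^ 2 / ((k₂ / θ ^ 2) * θ ^ 4) = 0 := by
        rw [div_mul_cancel₀ _ (by positivity : (θ:ℝ) ^ 2 ≠ 0)]
        simp
      have := hc.tendsto.mono_left (nhdsWithin_le_nhds (s := Set.Iio (k₂ / θ ^ 2)))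
      rwa [hval] at this
    apply tendsto_of_tendsto_of_tendsto_of_le_of_le' tendsto_const_nhds hupper
    · -- 0 ≤ g
      filter_upwards [hmem] with A hA
      obtain ⟨hA1, hA2⟩ := hA
      have hy := (hybar A hA1 hA2).1
      have hkey := key A hA1 hA2
      have hcl := aux_cosh_le (x := θ * ybar A) (by positivity)
      rw [gval A]
      nlinarith [mul_le_mul_of_nonneg_left hcl hA1.le]
    · -- g ≤ upper bound
      filter_upwards [hmem] with A hA
      obtain ⟨hA1, hA2⟩ := hA
      have hy := (hybar A hA1 hA2).1
      have hkey := key A hA1 hA2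
      have hcge := aux_cosh_ge (x := θ * ybar A) (by positivity)
      have hsge := aux_sinh_ge (x := θ * ybar A) (by positivity)
      have hctr : k₂ - A * θ ^ 2 > 0 := by
        have := (lt_div_iff₀ (by positivity : (0:ℝ) < θ ^ 2)).1 hA2
        linarith
      -- y² bound: A θ⁴ y² ≤ 6 (k₂ - A θ²)
      have hy2 : A * θ ^ 4 * (ybar A) ^ 2 ≤ 6 * (k₂ - A * θ ^ 2) := by
        have h3 : A * θ * (θ * ybar A + (θ * ybar A) ^ 3 / 6) ≤ k₂ * ybar A := by
          calc A * θ * (θ * ybar A + (θ * ybar A) ^ 3 / 6)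
              ≤ A * θ * Real.sinh (θ * ybar A) :=
                mul_le_mul_of_nonneg_left hsge (by positivity)
            _ = k₂ * ybar A := hkey
        have h4 : A * θ ^ 2 * ybar A + A * θ ^ 4 * (ybar A) ^ 3 / 6 ≤ k₂ * ybar A := by
          nlinarith
        nlinarith [mul_pos hA1 hy, sq_nonneg (ybar A)]
      -- g ≤ (k₂ - Aθ²) y²
      have hg5 : gFun θ k₂ ybar A ≤ (k₂ - A * θ ^ 2) * (ybar A) ^ 2 := by
        rw [gval A]
        nlinarith [mul_le_mul_of_nonneg_left hcge hA1.le]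
      rw [le_div_iff₀ (by positivity : (0:ℝ) < A * θ ^ 4)]
      calc gFun θ k₂ ybar A * (A * θ ^ 4)
          ≤ ((k₂ - A * θ ^ 2) * (ybar A) ^ 2) * (A * θ ^ 4) :=
            mul_le_mul_of_nonneg_right hg5 (by positivity)
        _ ≤ 6 * (k₂ - A * θ ^ 2) ^ 2 := by nlinarith
end

section
/- For every c > 0 there exists a unique pair (A, ȳ) of real numbers with A > 0 and ȳ > 0 satisfying the two equations A θ e^{θ ȳ} − A θ e^{−θ ȳ} − 2 k₂ ȳ = 0 and A e^{θ ȳ} + A e^{−θ ȳ} − k₂ ȳ² − 2A + c = 0. -/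
/-!
The first equation says `A θ sinh (θ ȳ) = k₂ ȳ`, so `A` is determined by `ȳ`. Substituting it
into the second and using the half-angle identity `(cosh x - 1) / sinh x = tanh (x / 2)` leaves,
for `u = θ ȳ / 2`, the single equation `u (u - tanh u) = c θ² / (4 k₂)`. Since
`(u - tanh u)' = tanh² u`, the map `u ↦ u (u - tanh u)` increases strictly from `0` to `∞` on
`[0, ∞)`, so this equation has exactly one positive root.
-/

open Set

namespace Real

theorem hasDerivAt_tanh (x : ℝ) : HasDerivAt tanh (1 - tanh x ^ 2) x := by
  have h : HasDerivAt (fun y => sinh y / cosh y)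
      ((cosh x * cosh x - sinh x * sinh x) / cosh x ^ 2) x :=
    (hasDerivAt_sinh x).div (hasDerivAt_cosh x) (cosh_pos x).ne'
  refine (h.congr_deriv ?_).congr_of_eventuallyEq (.of_forall tanh_eq_sinh_div_cosh)
  have := cosh_pos x
  rw [tanh_eq_sinh_div_cosh]
  field_simp

theorem continuous_tanh : Continuous tanh :=
  continuous_iff_continuousAt.2 fun x => (hasDerivAt_tanh x).continuousAt

theorem strictMonoOn_sub_tanh : StrictMonoOn (fun x => x - tanh x) (Ici 0) := by
  refine strictMonoOn_of_hasDerivWithinAt_pos (convex_Ici 0) ?_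
    (fun x _ => ((hasDerivAt_id x).sub (hasDerivAt_tanh x)).hasDerivWithinAt) ?_
  · exact (continuous_id.sub continuous_tanh).continuousOn
  · intro x hx
    rw [interior_Ici, mem_Ioi] at hx
    have : 0 < tanh x := by
      rw [tanh_eq_sinh_div_cosh]; exact div_pos (sinh_pos_iff.mpr hx) (cosh_pos x)
    simpa using pow_pos this 2

theorem tanh_le_self {x : ℝ} (hx : 0 ≤ x) : tanh x ≤ x := by
  simpa using strictMonoOn_sub_tanh.monotoneOn self_mem_Ici hx hx

theorem strictMonoOn_mul_sub_tanh : StrictMonoOn (fun x => x * (x - tanh x)) (Ici 0) := by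
  intro a ha b hb hab
  exact mul_lt_mul' hab.le (strictMonoOn_sub_tanh ha hb hab) (sub_nonneg.mpr (tanh_le_self ha))
    (lt_of_le_of_lt ha hab)

theorem existsUnique_pos_mul_sub_tanh_eq {d : ℝ} (hd : 0 < d) :
    ∃! x, 0 < x ∧ x * (x - tanh x) = d := by
  have hbig : d < (d + 1) * (d + 1 - tanh (d + 1)) := by
    nlinarith [tanh_lt_one (d + 1)]
  obtain ⟨x, hx, hxd⟩ := intermediate_value_Ioo (by linarith : (0:ℝ) ≤ d + 1)
    (continuous_id.mul (continuous_id.sub continuous_tanh)).continuousOn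
    (show d ∈ Ioo ((0:ℝ) * (0 - tanh 0)) _ from ⟨by simpa using hd, hbig⟩)
  refine ⟨x, ⟨hx.1, hxd⟩, fun x' ⟨hx', hx'd⟩ => ?_⟩
  exact strictMonoOn_mul_sub_tanh.injOn hx'.le hx.1.le (hx'd.trans hxd.symm)

end Real

open Real

theorem exp_system_iff {θ k₂ c A y : ℝ} (hθ : 0 < θ) (hk : k₂ ≠ 0) (hy : 0 < y) :
    (A * θ * exp (θ * y) - A * θ * exp (-(θ * y)) - 2 * k₂ * y = 0 ∧
      A * exp (θ * y) + A * exp (-(θ * y)) - k₂ * y ^ 2 - 2 * A + c = 0) ↔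
    A = k₂ * y / (θ * sinh (θ * y)) ∧
      θ * y / 2 * (θ * y / 2 - tanh (θ * y / 2)) = c * θ ^ 2 / (4 * k₂) := by
  obtain ⟨u, rfl⟩ : ∃ u, y = 2 * u / θ := ⟨θ * y / 2, by field_simp⟩
  have hθu : θ * (2 * u / θ) = 2 * u := by field_simp
  have hu : 0 < u := by have := mul_pos hθ hy; linarith
  have hs : 0 < sinh u := sinh_pos_iff.mpr hu
  have hc : 0 < cosh u := cosh_pos u
  have e_sub : exp (2 * u) - exp (-(2 * u)) = 4 * sinh u * cosh u := by
    linear_combination -2 * sinh_eq (2 * u) + 2 * sinh_two_mul u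
  have e_add : exp (2 * u) + exp (-(2 * u)) = 2 + 4 * sinh u ^ 2 := by
    linear_combination -2 * cosh_eq (2 * u) + 2 * cosh_two_mul u + 2 * cosh_sq u
  rw [hθu, mul_div_cancel_left₀ u two_ne_zero, sinh_two_mul, tanh_eq_sinh_div_cosh]
  -- both systems are equivalent to this polynomial one in `A`, `sinh u` and `cosh u`
  trans A * θ ^ 2 * sinh u * cosh u = k₂ * u ∧
    4 * A * θ ^ 2 * sinh u ^ 2 = 4 * k₂ * u ^ 2 - c * θ ^ 2
  · constructor
    · rintro ⟨h1, h2⟩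
      field_simp at h1 h2
      exact ⟨by linear_combination h1 / 4 - A * θ ^ 2 / 4 * e_sub,
        by linear_combination h2 - A * θ ^ 2 * e_add⟩
    · rintro ⟨h1, h2⟩
      constructor
      · field_simp
        linear_combination 4 * h1 + A * θ ^ 2 * e_sub
      · field_simp
        linear_combination h2 + A * θ ^ 2 * e_add
  · constructor
    · rintro ⟨h1, h2⟩
      constructor
      · field_simp
        linear_combination h1
      · field_simp
        linear_combination 4 * sinh u * h1 - cosh u * h2
    · rintro ⟨h1, h2⟩
      field_simp at h1 h2
      have hA : A * θ ^ 2 * sinh u * cosh u = k₂ * u := by linear_combination h1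
      refine ⟨hA, mul_left_cancel₀ hc.ne' ?_⟩
      linear_combination 4 * sinh u * hA - h2

theorem stmt_6 (θ k₂ c : ℝ) (hθ : 0 < θ) (hk : 0 < k₂) (hc : 0 < c) :
    ∃! p : ℝ × ℝ, 0 < p.1 ∧ 0 < p.2 ∧
      p.1 * θ * Real.exp (θ * p.2) - p.1 * θ * Real.exp (-(θ * p.2)) - 2 * k₂ * p.2 = 0 ∧
      p.1 * Real.exp (θ * p.2) + p.1 * Real.exp (-(θ * p.2)) - k₂ * p.2 ^ 2 - 2 * p.1 + c = 0 := by
  obtain ⟨u, ⟨hu, hud⟩, hu_unique⟩ :=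
    existsUnique_pos_mul_sub_tanh_eq (by positivity : 0 < c * θ ^ 2 / (4 * k₂))
  obtain ⟨y₀, hy₀, rfl⟩ : ∃ y₀, 0 < y₀ ∧ θ * y₀ / 2 = u :=
    ⟨2 * u / θ, by positivity, by field_simp⟩
  have hsinh : 0 < sinh (θ * y₀) := sinh_pos_iff.mpr (by positivity)
  refine ⟨(k₂ * y₀ / (θ * sinh (θ * y₀)), y₀),
    ⟨by positivity, hy₀, (exp_system_iff hθ hk.ne' hy₀).2 ⟨rfl, hud⟩⟩, ?_⟩
  rintro ⟨A, y⟩ ⟨-, hy, hsys⟩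
  obtain ⟨hA, hyd⟩ := (exp_system_iff hθ hk.ne' hy).1 hsys
  have hy_eq : y = y₀ :=
    mul_left_cancel₀ hθ.ne' (by linarith [hu_unique _ ⟨by positivity, hyd⟩])
  subst hy_eq
  exact Prod.ext hA rfl
end

section
/- For every c ∈ (0, c̄) and every x ∈ ℝ, V^c(x) < y_v/ρ. -/
/-- `φ_A(x) = A e^{θ(x−x_v)} + A e^{−θ(x−x_v)} − k₂ (x−x_v)² + k₀`. -/
noncomputable def phiFun (θ k₂ k₀ xv A x : ℝ) : ℝ :=
  A * Real.exp (θ * (x - xv)) + A * Real.exp (-(θ * (x - xv))) - k₂ * (x - xv) ^ 2 + k₀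

/-- `V^c(x) = φ_{A(c)}(x)` on `(x_v − ȳ(c), x_v + ȳ(c))`, and `φ_{A(c)}(x_v) − c` otherwise. -/
noncomputable def VFun (θ k₂ k₀ xv : ℝ) (Ac ybc : ℝ → ℝ) (c x : ℝ) : ℝ :=
  if xv - ybc c < x ∧ x < xv + ybc c then phiFun θ k₂ k₀ xv (Ac c) x
  else phiFun θ k₂ k₀ xv (Ac c) xv - c

/-- `ξ(y) = k₂ y² − (2k₂/θ) ((e^{θy}+e^{−θy}−2)/(e^{θy}−e^{−θy})) y`. -/
noncomputable def xiFun (θ k₂ y : ℝ) : ℝ :=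
  k₂ * y ^ 2 -
    (2 * k₂ / θ) *
      ((Real.exp (θ * y) + Real.exp (-(θ * y)) - 2) /
        (Real.exp (θ * y) - Real.exp (-(θ * y)))) * y



/-- `sinh t ≤ t * cosh t` for `t ≥ 0`. -/
lemma aux_sinh_le_mul_cosh (t : ℝ) (ht : 0 ≤ t) : Real.sinh t ≤ t * Real.cosh t := by
  have hmono : Monotone (fun s : ℝ => s * Real.cosh s - Real.sinh s) := by
    apply monotone_of_deriv_nonneg
    · exact (differentiable_id.mul Real.differentiable_cosh).sub Real.differentiable_sinh
    · intro s
      have h : HasDerivAt (fun s : ℝ => s * Real.cosh s - Real.sinh s)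
          (1 * Real.cosh s + s * Real.sinh s - Real.cosh s) s :=
        ((hasDerivAt_id s).mul (Real.hasDerivAt_cosh s)).sub (Real.hasDerivAt_sinh s)
      rw [h.deriv]
      have hs : 0 ≤ s * Real.sinh s := by
        rcases le_total 0 s with h0 | h0
        · exact mul_nonneg h0 (Real.sinh_nonneg_iff.2 h0)
        · have := Real.sinh_le_sinh.2 h0
          rw [Real.sinh_zero] at this
          nlinarith
      linarith
  have := hmono ht
  simp only [Real.cosh_zero, Real.sinh_zero, mul_one, zero_mul, sub_zero, zero_sub, neg_nonpos]
    at this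
  linarith [this]

/-- `cosh t − 1 ≤ (t/2) sinh t` for `t ≥ 0`. -/
lemma aux_cosh_sub_one_le (t : ℝ) (ht : 0 ≤ t) :
    Real.cosh t - 1 ≤ t / 2 * Real.sinh t := by
  have hmono : MonotoneOn (fun s : ℝ => s / 2 * Real.sinh s - Real.cosh s) (Set.Ici 0) := by
    apply monotoneOn_of_deriv_nonneg (convex_Ici 0)
    · exact (((differentiable_id.div_const 2).mul Real.differentiable_sinh).sub
        Real.differentiable_cosh).continuous.continuousOn
    · exact (((differentiable_id.div_const 2).mul Real.differentiable_sinh).sub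
        Real.differentiable_cosh).differentiableOn
    · intro s hs
      rw [interior_Ici] at hs
      have h : HasDerivAt (fun s : ℝ => s / 2 * Real.sinh s - Real.cosh s)
          (1 / 2 * Real.sinh s + s / 2 * Real.cosh s - Real.sinh s) s :=
        (((hasDerivAt_id s).div_const 2).mul (Real.hasDerivAt_sinh s)).sub
          (Real.hasDerivAt_cosh s)
      rw [h.deriv]
      have := aux_sinh_le_mul_cosh s (le_of_lt hs)
      linarith
  have := hmono (Set.self_mem_Ici) (Set.mem_Ici.2 ht) ht
  simp only [Real.cosh_zero, Real.sinh_zero, mul_zero, zero_div, zero_mul, zero_sub] at this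
  linarith

/-- `sinh` is convex on `[0, ∞)`. -/
lemma aux_convexOn_sinh : ConvexOn ℝ (Set.Ici 0) Real.sinh := by
  apply convexOn_of_deriv2_nonneg' (convex_Ici 0) Real.differentiable_sinh.differentiableOn
  · rw [Real.deriv_sinh]; exact Real.differentiable_cosh.differentiableOn
  · intro x hx
    have : deriv^[2] Real.sinh x = Real.sinh x := by
      simp [Function.iterate_succ, Real.deriv_sinh, Real.deriv_cosh]
    rw [this]
    exact Real.sinh_nonneg_iff.2 hx

/-- key: `sinh (θ v) ≤ (v / Y) * sinh (θ Y)` for `0 ≤ v ≤ Y`, `θ > 0`. -/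
lemma aux_sinh_frac (θ v Y : ℝ) (hθ : 0 < θ) (hv : 0 ≤ v) (hvY : v ≤ Y) (hY : 0 < Y) :
    Real.sinh (θ * v) ≤ v / Y * Real.sinh (θ * Y) := by
  have h1 : (0:ℝ) ≤ v / Y := div_nonneg hv hY.le
  have h2 : (0:ℝ) ≤ 1 - v / Y := by
    have : v / Y ≤ 1 := (div_le_one hY).2 hvY
    linarith
  have := aux_convexOn_sinh.2 (Set.mem_Ici.2 (mul_nonneg hθ.le hY.le))
    (Set.mem_Ici.2 le_rfl) h1 h2 (by ring)
  have harg : v / Y * (θ * Y) + (1 - v / Y) * 0 = θ * v := by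
    field_simp; ring
  rw [smul_eq_mul, smul_eq_mul, harg] at this
  simpa using this

/-- key inequality : `2A (cosh (θ u) − 1) ≤ k₂ u²` given the zero condition at `Y`. -/
lemma aux_key (θ k₂ A Y u : ℝ) (hθ : 0 < θ) (hA : 0 < A) (hY : 0 < Y)
    (hu : |u| ≤ Y) (heq : A * θ * Real.sinh (θ * Y) = k₂ * Y) :
    2 * A * (Real.cosh (θ * u) - 1) ≤ k₂ * u ^ 2 := by
  have hu' : |u| ≤ Y := hu
  have hcosh : Real.cosh (θ * u) = Real.cosh (θ * |u|) := by
    rcases abs_choice u with h | h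
    · rw [h]
    · rw [h, show θ * -u = -(θ * u) by ring, Real.cosh_neg]
  have hsq : u ^ 2 = |u| ^ 2 := (sq_abs u).symm
  rw [hcosh, hsq]
  have habs : 0 ≤ |u| := abs_nonneg u
  generalize hgen : |u| = v at hu' habs ⊢
  have hv0 : 0 ≤ v := habs
  have hu : v ≤ Y := hu'
  have h1 : Real.cosh (θ * v) - 1 ≤ θ * v / 2 * Real.sinh (θ * v) :=
    aux_cosh_sub_one_le (θ * v) (mul_nonneg hθ.le hv0)
  have h2 : Real.sinh (θ * v) ≤ v / Y * Real.sinh (θ * Y) :=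
    aux_sinh_frac θ v Y hθ hv0 hu hY
  have hsnn : 0 ≤ Real.sinh (θ * v) := Real.sinh_nonneg_iff.2 (mul_nonneg hθ.le hv0)
  have h3 : θ * v / 2 * Real.sinh (θ * v) ≤ θ * v / 2 * (v / Y * Real.sinh (θ * Y)) := by
    apply mul_le_mul_of_nonneg_left h2
    positivity
  have h4 : θ * v / 2 * (v / Y * Real.sinh (θ * Y)) = v ^ 2 / (2 * A * Y) * (k₂ * Y) := by
    rw [← heq]; field_simp
  have h5 : v ^ 2 / (2 * A * Y) * (k₂ * Y) = k₂ * v ^ 2 / (2 * A) := by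
    field_simp
  have e1 : 2 * A * (Real.cosh (θ * v) - 1) ≤ 2 * A * (θ * v / 2 * Real.sinh (θ * v)) := by
    nlinarith
  have e2 : θ * v / 2 * Real.sinh (θ * v) ≤ k₂ * v ^ 2 / (2 * A) := by
    calc θ * v / 2 * Real.sinh (θ * v) ≤ θ * v / 2 * (v / Y * Real.sinh (θ * Y)) := h3
    _ = v ^ 2 / (2 * A * Y) * (k₂ * Y) := h4
    _ = k₂ * v ^ 2 / (2 * A) := h5
  have e3 : 2 * A * (k₂ * v ^ 2 / (2 * A)) = k₂ * v ^ 2 := by field_simp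
  nlinarith [mul_le_mul_of_nonneg_left e2 (by linarith : (0:ℝ) ≤ 2 * A)]

theorem stmt_14 (ρ σ Δ b θ k₂ k₀ α xv yv : ℝ)
    (hρ : 0 < ρ) (hσ : 0 < σ) (hΔ : 0 < Δ) (hb : 0 ≤ b)
    (hθ : θ = Real.sqrt (2 * ρ) / σ)
    (hα : α = (Δ + b) / Δ ^ 2)
    (hxv : xv = Δ * (Δ + 2 * b) / (2 * (Δ + b)))
    (hyv : yv = Δ ^ 2 / (4 * (Δ + b)))
    (hk₂ : k₂ = α / ρ)
    (hk₀ : k₀ = yv / ρ - 2 * k₂ / θ ^ 2)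
    (ybarA : ℝ → ℝ)
    (hybarA : ∀ A : ℝ, 0 < A → A < k₂ / θ ^ 2 →
      0 < ybarA A ∧ hFun θ k₂ A (ybarA A) = 0)
    (Ac : ℝ → ℝ)
    (hAc : ∀ c : ℝ, 0 < c →
      0 < Ac c ∧ Ac c < k₂ / θ ^ 2 ∧ gFun θ k₂ ybarA (Ac c) = c) :
    ∀ c : ℝ, 0 < c → c < xiFun θ k₂ (Δ - xv) →
      ∀ x : ℝ, VFun θ k₂ k₀ xv Ac (fun c => ybarA (Ac c)) c x < yv / ρ := by
  intro c hc _ x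
  have hθ0 : 0 < θ := by
    rw [hθ]
    exact div_pos (Real.sqrt_pos.2 (by linarith)) hσ
  obtain ⟨hA0, hAk, -⟩ := hAc c hc
  set A := Ac c with hAdef
  obtain ⟨hY0, hH⟩ := hybarA A hA0 hAk
  set Y := ybarA A with hYdef
  -- translate hFun = 0 into sinh form
  have hsinh : A * θ * Real.sinh (θ * Y) = k₂ * Y := by
    rw [Real.sinh_eq]
    unfold hFun at hH
    linarith
  have hθsq : 0 < θ ^ 2 := by positivity
  have h2A : 2 * A < 2 * k₂ / θ ^ 2 := by
    rw [show 2 * k₂ / θ ^ 2 = 2 * (k₂ / θ ^ 2) by ring]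
    linarith
  unfold VFun
  split_ifs with hmem
  · -- interior case
    obtain ⟨h1, h2⟩ := hmem
    have hu : |x - xv| ≤ Y := abs_le.2 ⟨by linarith, by linarith⟩
    have hkey := aux_key θ k₂ A Y (x - xv) hθ0 hA0 hY0 hu hsinh
    rw [Real.cosh_eq] at hkey
    unfold phiFun
    rw [hk₀]
    have hlt : A < k₂ / θ ^ 2 := hAk
    -- A e^{θu} + A e^{-θu} - k₂ u² ≤ 2A < 2k₂/θ²
    nlinarith [hkey, h2A]
  · -- exterior case
    unfold phiFun
    simp only [sub_self, mul_zero, Real.exp_zero, neg_zero]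
    rw [hk₀]
    have : (0:ℝ) ^ 2 = 0 := by norm_num
    nlinarith [h2A, hc]
end

section
/- For all 0 < c₁ < c₂ < c̄ and every x ∈ ℝ, V^{c₂}(x) < V^{c₁}(x); that is, for each fixed x the value c ↦ V^c(x) is strictly decreasing in the intervention cost on (0, c̄). -/
/-! Write `φ_A(x) = ψ_A(x - x_v) + k₀` with `ψ_A(s) = 2A cosh(θs) - k₂ s²`, so that `h_A = ψ_A'`.
On the curve `h_A(ȳ) = 0` one has `A θ² · sinh(θȳ)/(θȳ) = k₂` and `g(A) = ξ(ȳ)`. Since both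
`sinh t / t` and `ξ` are strictly increasing, a larger cost `c` gives a larger threshold `ȳ(c)` and
a smaller coefficient `A(c)`. Inside the smaller continuation region `V^c = ψ_{A(c)} + k₀` grows
with `A`; between the two thresholds `ψ_{A(c₂)}` decreases in `|x - x_v|` up to `ȳ(c₂)`; outside
both, `V^c = 2A(c) + k₀ - c`. -/

open Real Set

lemma strictConvexOn_sinh : StrictConvexOn ℝ (Ici 0) sinh :=
  StrictMonoOn.strictConvexOn_of_deriv (convex_Ici 0) continuous_sinh.continuousOn
    (by rw [Real.deriv_sinh, interior_Ici]; exact cosh_strictMonoOn.mono Ioi_subset_Ici_self)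

lemma strictMonoOn_sinh_div_self : StrictMonoOn (fun t => sinh t / t) (Ioi 0) :=
  fun _ hs _ ht hst => by
    simpa using strictConvexOn_sinh.secant_strict_mono (a := 0) (mem_Ici.2 le_rfl)
      (mem_Ici.2 hs.le) (mem_Ici.2 ht.le) hs.ne' ht.ne' hst

lemma strictMonoOn_add_four_div_exp_add_one :
    StrictMonoOn (fun t => t + 4 / (exp t + 1)) (Ici 0) := by
  have hderiv (t : ℝ) : HasDerivAt (fun t => t + 4 / (exp t + 1))
      ((exp t - 1) ^ 2 / (exp t + 1) ^ 2) t := by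
    refine ((hasDerivAt_id' t).add ((hasDerivAt_const t 4).div
      ((hasDerivAt_exp t).add_const 1) (by positivity))).congr_deriv ?_
    field_simp
    ring
  refine strictMonoOn_of_deriv_pos (convex_Ici 0) ?_ fun t ht => ?_
  · exact fun t _ => (hderiv t).continuousAt.continuousWithinAt
  · rw [interior_Ici] at ht
    have : 0 < exp t - 1 := sub_pos.2 (one_lt_exp_iff.2 ht)
    rw [(hderiv t).deriv]
    positivity

lemma strictMonoOn_mul_add_four_div_exp_add_one_sub_two :
    StrictMonoOn (fun t => t * (t + 4 / (exp t + 1) - 2)) (Ioi 0) := by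
  intro s hs t ht hst
  have hw := strictMonoOn_add_four_div_exp_add_one
  have hs_pos : 2 < s + 4 / (exp s + 1) := by
    have := hw (mem_Ici.2 le_rfl) (mem_Ici.2 hs.le) hs
    norm_num at this
    linarith
  have hst' := hw (mem_Ici.2 hs.le) (mem_Ici.2 ht.le) hst
  exact mul_lt_mul'' hst (by linarith) hs.le (by linarith)

lemma exp_sub_exp_neg_ne_zero {t : ℝ} (ht : t ≠ 0) : exp t - exp (-t) ≠ 0 := by
  rw [show exp t - exp (-t) = 2 * sinh t by rw [sinh_eq]; ring]
  exact mul_ne_zero two_ne_zero fun h => ht (sinh_injective (h.trans sinh_zero.symm))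

lemma xiFun_eq_of_ne_zero {θ k₂ y : ℝ} (hθ : θ ≠ 0) (hy : y ≠ 0) :
    xiFun θ k₂ y = k₂ / θ ^ 2 * ((θ * y) * (θ * y + 4 / (exp (θ * y) + 1) - 2)) := by
  have hE := exp_sub_exp_neg_ne_zero (mul_ne_zero hy hθ)
  have hEF : exp (y * θ) * exp (-(y * θ)) = 1 := by rw [← exp_add]; simp
  rw [xiFun]
  -- `(e^t + e^{-t} - 2) / (e^t - e^{-t}) = 1 - 2 / (e^t + 1)`
  field_simp
  linear_combination (-4 * k₂) * hEF

lemma xiFun_strictMonoOn {θ k₂ : ℝ} (hθ : 0 < θ) (hk : 0 < k₂) :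
    StrictMonoOn (xiFun θ k₂) (Ioi 0) := by
  intro s hs t ht hst
  rw [xiFun_eq_of_ne_zero hθ.ne' hs.ne', xiFun_eq_of_ne_zero hθ.ne' ht.ne']
  exact mul_lt_mul_of_pos_left (strictMonoOn_mul_add_four_div_exp_add_one_sub_two
    (mul_pos hθ hs) (mul_pos hθ ht) (mul_lt_mul_of_pos_left hst hθ)) (by positivity)

noncomputable def psiFun (θ k₂ A s : ℝ) : ℝ :=
  2 * A * cosh (θ * s) - k₂ * s ^ 2

lemma phiFun_eq_psiFun (θ k₂ k₀ xv A x : ℝ) :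
    phiFun θ k₂ k₀ xv A x = psiFun θ k₂ A (x - xv) + k₀ := by
  rw [phiFun, psiFun, cosh_eq]
  ring

lemma gFun_eq_psiFun (θ k₂ : ℝ) (ybar : ℝ → ℝ) (A : ℝ) :
    gFun θ k₂ ybar A = 2 * A - psiFun θ k₂ A (ybar A) := by
  rw [gFun, psiFun, cosh_eq]
  ring

lemma psiFun_zero (θ k₂ A : ℝ) : psiFun θ k₂ A 0 = 2 * A := by
  simp [psiFun]

lemma psiFun_abs (θ k₂ A s : ℝ) : psiFun θ k₂ A |s| = psiFun θ k₂ A s := by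
  rw [psiFun, psiFun, ← cosh_abs, abs_mul, abs_abs, ← abs_mul, cosh_abs, sq_abs]

lemma psiFun_strictMono_left (θ k₂ s : ℝ) : StrictMono fun A => psiFun θ k₂ A s := by
  intro A₁ A₂ hA
  have := cosh_pos (θ * s)
  simp only [psiFun]
  nlinarith

lemma hasDerivAt_psiFun (θ k₂ A s : ℝ) : HasDerivAt (psiFun θ k₂ A) (hFun θ k₂ A s) s := by
  have hθs : HasDerivAt (fun s => θ * s) θ s := by simpa using (hasDerivAt_id s).const_mul θ
  refine (((hθs.cosh).const_mul (2 * A)).sub ((hasDerivAt_pow 2 s).const_mul k₂)).congr_deriv ?_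
  rw [hFun, sinh_eq]
  ring

lemma hFun_eq_mul_sinh_div {θ k₂ A s : ℝ} (hs : s ≠ 0) :
    hFun θ k₂ A s = 2 * s * (A * θ ^ 2 * (sinh (θ * s) / (θ * s)) - k₂) := by
  rw [hFun, sinh_eq]
  field_simp

lemma hFun_nonpos_of_hFun_eq_zero {θ k₂ A s y : ℝ} (hθ : 0 < θ) (hA : 0 ≤ A) (hs : 0 < s)
    (hsy : s ≤ y) (h : hFun θ k₂ A y = 0) : hFun θ k₂ A s ≤ 0 := by
  have hy : 0 < y := hs.trans_le hsy
  rw [hFun_eq_mul_sinh_div hy.ne', mul_eq_zero, sub_eq_zero] at h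
  have hS := strictMonoOn_sinh_div_self.monotoneOn (mul_pos hθ hs) (mul_pos hθ hy)
    (mul_le_mul_of_nonneg_left hsy hθ.le)
  rw [hFun_eq_mul_sinh_div hs.ne']
  refine mul_nonpos_of_nonneg_of_nonpos (by positivity) (sub_nonpos.2 ?_)
  rw [← h.resolve_left (by positivity)]
  exact mul_le_mul_of_nonneg_left hS (by positivity)

lemma psiFun_antitoneOn {θ k₂ A y : ℝ} (hθ : 0 < θ) (hA : 0 ≤ A) (h : hFun θ k₂ A y = 0) :
    AntitoneOn (psiFun θ k₂ A) (Icc 0 y) := by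
  refine antitoneOn_of_hasDerivWithinAt_nonpos (convex_Icc 0 y)
    (fun s _ => (hasDerivAt_psiFun θ k₂ A s).continuousAt.continuousWithinAt)
    (fun s _ => (hasDerivAt_psiFun θ k₂ A s).hasDerivWithinAt) fun s hs => ?_
  rw [interior_Icc] at hs
  exact hFun_nonpos_of_hFun_eq_zero hθ hA hs.1 hs.2.le h

lemma lt_of_hFun_eq_zero {θ k₂ A₁ A₂ y₁ y₂ : ℝ} (hθ : 0 < θ) (hA₂ : 0 < A₂) (hy₁ : 0 < y₁)
    (hy : y₁ < y₂) (h₁ : hFun θ k₂ A₁ y₁ = 0) (h₂ : hFun θ k₂ A₂ y₂ = 0) : A₂ < A₁ := by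
  have hy₂ : 0 < y₂ := hy₁.trans hy
  rw [hFun_eq_mul_sinh_div hy₁.ne', mul_eq_zero, sub_eq_zero] at h₁
  rw [hFun_eq_mul_sinh_div hy₂.ne', mul_eq_zero, sub_eq_zero] at h₂
  replace h₁ := h₁.resolve_left (by positivity)
  replace h₂ := h₂.resolve_left (by positivity)
  have hS₁ : 0 < sinh (θ * y₁) / (θ * y₁) := div_pos (sinh_pos_iff.2 (by positivity)) (by positivity)
  have hS := strictMonoOn_sinh_div_self (mul_pos hθ hy₁) (mul_pos hθ hy₂)
    (mul_lt_mul_of_pos_left hy hθ)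
  refine lt_of_mul_lt_mul_right (a := θ ^ 2 * (sinh (θ * y₁) / (θ * y₁))) ?_ (by positivity)
  calc A₂ * (θ ^ 2 * (sinh (θ * y₁) / (θ * y₁)))
      < A₂ * (θ ^ 2 * (sinh (θ * y₂) / (θ * y₂))) := by gcongr
    _ = A₁ * (θ ^ 2 * (sinh (θ * y₁) / (θ * y₁))) := by linear_combination h₂ - h₁

lemma gFun_eq_xiFun {θ k₂ A : ℝ} {ybar : ℝ → ℝ} (hθ : θ ≠ 0) (hy : ybar A ≠ 0)
    (h : hFun θ k₂ A (ybar A) = 0) : gFun θ k₂ ybar A = xiFun θ k₂ (ybar A) := by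
  have hE := exp_sub_exp_neg_ne_zero (mul_ne_zero hθ hy)
  rw [gFun, xiFun]
  rw [hFun] at h
  field_simp
  linear_combination (2 - exp (θ * ybar A) - exp (-(θ * ybar A))) * h

lemma VFun_lt_VFun {θ k₂ k₀ xv c₁ c₂ x : ℝ} {Ac ybc : ℝ → ℝ} (hc : c₁ < c₂)
    (hA : Ac c₂ < Ac c₁) (hy₁ : 0 ≤ ybc c₁) (hy : ybc c₁ < ybc c₂)
    (hψ : AntitoneOn (psiFun θ k₂ (Ac c₂)) (Icc 0 (ybc c₂)))
    (hc₁ : c₁ = 2 * Ac c₁ - psiFun θ k₂ (Ac c₁) (ybc c₁)) :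
    VFun θ k₂ k₀ xv Ac ybc c₂ x < VFun θ k₂ k₀ xv Ac ybc c₁ x := by
  have hregion (y : ℝ) : (xv - y < x ∧ x < xv + y) ↔ |x - xv| < y := by
    rw [abs_sub_lt_iff]
    constructor <;> rintro ⟨h, h'⟩ <;> constructor <;> linarith
  simp only [VFun, hregion, phiFun_eq_psiFun, sub_self, psiFun_zero, ← psiFun_abs θ k₂ _ (x - xv)]
  have hψA := psiFun_strictMono_left θ k₂ |x - xv| hA
  split_ifs with h₂ h₁ h₁
  · linarith
  · have hle := hψ ⟨hy₁, hy.le⟩ ⟨abs_nonneg _, h₂.le⟩ (not_lt.1 h₁)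
    linarith [psiFun_strictMono_left θ k₂ (ybc c₁) hA]
  · exact absurd (h₁.trans hy) h₂
  · linarith

theorem stmt_15_general (ρ σ Δ b θ k₂ k₀ α xv : ℝ)
    (hρ : 0 < ρ) (hσ : 0 < σ) (hΔ : 0 < Δ) (hb : 0 ≤ b)
    (hθ : θ = Real.sqrt (2 * ρ) / σ)
    (hα : α = (Δ + b) / Δ ^ 2)
    (hk₂ : k₂ = α / ρ)
    (ybarA : ℝ → ℝ)
    (hybarA : ∀ A : ℝ, 0 < A → A < k₂ / θ ^ 2 →
      0 < ybarA A ∧ hFun θ k₂ A (ybarA A) = 0)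
    (Ac : ℝ → ℝ)
    (hAc : ∀ c : ℝ, 0 < c →
      0 < Ac c ∧ Ac c < k₂ / θ ^ 2 ∧ gFun θ k₂ ybarA (Ac c) = c) :
    ∀ c₁ c₂ : ℝ, 0 < c₁ → c₁ < c₂ → c₂ < xiFun θ k₂ (Δ - xv) →
      ∀ x : ℝ,
        VFun θ k₂ k₀ xv Ac (fun c => ybarA (Ac c)) c₂ x <
          VFun θ k₂ k₀ xv Ac (fun c => ybarA (Ac c)) c₁ x := by
  intro c₁ c₂ hc₁ hc _ x
  have hθ₀ : 0 < θ := hθ ▸ div_pos (Real.sqrt_pos.2 (by positivity)) hσ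
  have hk₂₀ : 0 < k₂ := by rw [hk₂, hα]; positivity
  obtain ⟨hA₁, hA₁', hg₁⟩ := hAc c₁ hc₁
  obtain ⟨hA₂, hA₂', hg₂⟩ := hAc c₂ (hc₁.trans hc)
  obtain ⟨hy₁, hh₁⟩ := hybarA _ hA₁ hA₁'
  obtain ⟨hy₂, hh₂⟩ := hybarA _ hA₂ hA₂'
  have hy : ybarA (Ac c₁) < ybarA (Ac c₂) := by
    rwa [← (xiFun_strictMonoOn hθ₀ hk₂₀).lt_iff_lt hy₁ hy₂, ← gFun_eq_xiFun hθ₀.ne' hy₁.ne' hh₁,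
      ← gFun_eq_xiFun hθ₀.ne' hy₂.ne' hh₂, hg₁, hg₂]
  refine VFun_lt_VFun hc (lt_of_hFun_eq_zero hθ₀ hA₂ hy₁ hy hh₁ hh₂) hy₁.le hy
    (psiFun_antitoneOn hθ₀ hA₂.le hh₂) ?_
  rw [← gFun_eq_psiFun, hg₁]

theorem stmt_15 (ρ σ Δ b θ k₂ k₀ α xv yv : ℝ)
    (hρ : 0 < ρ) (hσ : 0 < σ) (hΔ : 0 < Δ) (hb : 0 ≤ b)
    (hθ : θ = Real.sqrt (2 * ρ) / σ)
    (hα : α = (Δ + b) / Δ ^ 2)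
    (hxv : xv = Δ * (Δ + 2 * b) / (2 * (Δ + b)))
    (hyv : yv = Δ ^ 2 / (4 * (Δ + b)))
    (hk₂ : k₂ = α / ρ)
    (hk₀ : k₀ = yv / ρ - 2 * k₂ / θ ^ 2)
    (ybarA : ℝ → ℝ)
    (hybarA : ∀ A : ℝ, 0 < A → A < k₂ / θ ^ 2 →
      0 < ybarA A ∧ hFun θ k₂ A (ybarA A) = 0)
    (Ac : ℝ → ℝ)
    (hAc : ∀ c : ℝ, 0 < c →
      0 < Ac c ∧ Ac c < k₂ / θ ^ 2 ∧ gFun θ k₂ ybarA (Ac c) = c) :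
    ∀ c₁ c₂ : ℝ, 0 < c₁ → c₁ < c₂ → c₂ < xiFun θ k₂ (Δ - xv) →
      ∀ x : ℝ,
        VFun θ k₂ k₀ xv Ac (fun c => ybarA (Ac c)) c₂ x <
          VFun θ k₂ k₀ xv Ac (fun c => ybarA (Ac c)) c₁ x :=
  stmt_15_general ρ σ Δ b θ k₂ k₀ α xv hρ hσ hΔ hb hθ hα hk₂ ybarA hybarA Ac hAc
end
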